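/- arXiv:1009.3205 — 2 statements merged into one kernel-verified Lean document; each statement's English description precedes it below -/
import Mathlib

section
/- Let Γ be a finite graph with Γ∖S connected, v₀ ∈ V(Γ), S ⊆ E(Γ), and q ∈ C⁰(Γ,ℚ) with |q| ∈ ℤ. Then the composition of the inclusion B^{v₀}_{Γ∖S}(q) ⊆ C⁰(Γ∖S, ℤ)_{|q|-|S|} with the quotient map to C⁰(Γ∖S,ℤ)_{|q|-|S|} / Im(Δ₀) is injective, where Δ₀ is the Laplacian of Γ∖S. In other words, two distinct v₀-quasistable 0-cochains are never equivalent modulo the image of the Laplacian of Γ∖S. -/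
open Finset

variable {V E : Type}

/-- Number of edges in `F` joining a vertex of `A` with a vertex of `B`. -/
def valS [DecidableEq V] [DecidableEq E] (ends : E → V × V) (F : Finset E)
    (A B : Finset V) : ℕ :=
  (F.filter (fun e => ((ends e).1 ∈ A ∧ (ends e).2 ∈ B) ∨
    ((ends e).1 ∈ B ∧ (ends e).2 ∈ A))).card

/-- Number of edges of the graph joining `A` and `B`. -/
def valAB [Fintype E] [DecidableEq V] [DecidableEq E] (ends : E → V × V)
    (A B : Finset V) : ℕ :=
  valS ends Finset.univ A B

/-- Number of edges of `F` with both endpoints in `W` (loops included). -/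
def insideE [DecidableEq V] [DecidableEq E] (ends : E → V × V) (W : Finset V)
    (F : Finset E) : ℕ :=
  (F.filter (fun e => (ends e).1 ∈ W ∧ (ends e).2 ∈ W)).card

/-- The Laplacian of the graph with vertex set `V` and edge set `F`. -/
def lapF [Fintype V] [Fintype E] [DecidableEq V] [DecidableEq E] (ends : E → V × V)
    (F : Finset E) (d : V → ℤ) (v : V) : ℤ :=
  -d v * (valS ends F {v} {v}ᶜ : ℤ) +
    ∑ w ∈ Finset.univ.erase v, d w * (valS ends F {v} {w} : ℤ)

/-- Characteristic 0-cochain of a set of vertices. -/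
def chi [DecidableEq V] (A : Finset V) (v : V) : ℤ := if v ∈ A then 1 else 0

/-- Reachability using edges belonging to `F`. -/
def Reaches (ends : E → V × V) (F : Finset E) (u v : V) : Prop :=
  Relation.ReflTransGen (fun a b => ∃ e ∈ F, ends e = (a, b) ∨ ends e = (b, a)) u v

/-- Connectedness of the graph with vertex set `V` and edge set `F`. -/
def ConnF (ends : E → V × V) (F : Finset E) : Prop :=
  ∀ u v : V, Reaches ends F u v

/-- Complexity: the number of spanning trees using edges from `F`
(a spanning tree is a connected spanning subgraph with `|V| - 1` edges). -/
noncomputable def complexity [Fintype V] (ends : E → V × V) (F : Finset E) : ℕ :=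
  {T : Finset E | T ⊆ F ∧ ConnF ends T ∧ T.card = Fintype.card V - 1}.ncard

/-- The quantity η(d, W) = -d_W - |S ∩ E(Γ[W])| + q_W - val(W)/2. -/
def eta [Fintype V] [Fintype E] [DecidableEq V] [DecidableEq E]
    (ends : E → V × V) (S : Finset E) (q : V → ℚ) (d : V → ℤ) (W : Finset V) : ℚ :=
  -(∑ w ∈ W, (d w : ℚ)) - (insideE ends W S : ℚ) + (∑ w ∈ W, q w)
    - (valAB ends W Wᶜ : ℚ) / 2

/-- The quantity ε(d, W) = d_W + |S ∩ E(Γ[W])| - q_W - val(W)/2 + val_S(W). -/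
def eps [Fintype V] [Fintype E] [DecidableEq V] [DecidableEq E]
    (ends : E → V × V) (S : Finset E) (q : V → ℚ) (d : V → ℤ) (W : Finset V) : ℚ :=
  (∑ w ∈ W, (d w : ℚ)) + (insideE ends W S : ℚ) - (∑ w ∈ W, q w)
    - (valAB ends W Wᶜ : ℚ) / 2 + (valS ends S W Wᶜ : ℚ)

/-- A 0-cochain `d` is semistable on Γ∖S with respect to `q`. -/
def Semistable [Fintype V] [Fintype E] [DecidableEq V] [DecidableEq E]
    (ends : E → V × V) (S : Finset E) (q : V → ℚ) (d : V → ℤ) : Prop :=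
  ((∑ v, d v : ℤ) : ℚ) = (∑ v, q v) - S.card ∧
  ∀ W : Finset V, W ≠ Finset.univ →
    (∑ w ∈ W, (d w : ℚ)) + (insideE ends W S : ℚ) ≥
      (∑ w ∈ W, q w) - (valAB ends W Wᶜ : ℚ) / 2

/-- A 0-cochain `d` is `v₀`-quasistable on Γ∖S with respect to `q`. -/
def Quasistable [Fintype V] [Fintype E] [DecidableEq V] [DecidableEq E]
    (ends : E → V × V) (S : Finset E) (q : V → ℚ) (v₀ : V) (d : V → ℤ) : Prop :=
  Semistable ends S q d ∧
  ∀ W : Finset V, W ≠ Finset.univ → v₀ ∈ W →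
    (∑ w ∈ W, (d w : ℚ)) + (insideE ends W S : ℚ) >
      (∑ w ∈ W, q w) - (valAB ends W Wᶜ : ℚ) / 2

/-- Connectedness of the subgraph induced on `A`. -/
def ConnOn (ends : E → V × V) (A : Finset V) : Prop :=
  ∀ u ∈ A, ∀ v ∈ A,
    Relation.ReflTransGen
      (fun a b => a ∈ A ∧ b ∈ A ∧ ∃ e : E, ends e = (a, b) ∨ ends e = (b, a)) u v

/-- `C` is a connected component of the subgraph induced on `A`. -/
def IsCompOf [DecidableEq V] (ends : E → V × V) (C A : Finset V) : Prop :=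
  C.Nonempty ∧ C ⊆ A ∧ ConnOn ends C ∧
  ∀ e : E, ¬ (((ends e).1 ∈ C ∧ (ends e).2 ∈ A \ C) ∨
    ((ends e).1 ∈ A \ C ∧ (ends e).2 ∈ C))

/-- An edge is a bridge (separating node) if removing it disconnects the graph. -/
def Bridge [Fintype E] [DecidableEq E] (ends : E → V × V) (e : E) : Prop :=
  ¬ ConnF ends (Finset.univ.erase e)

/-- `e` is a boundary edge of `W`: it joins `W` with its complement. -/
def Boundary (ends : E → V × V) (W : Finset V) (e : E) : Prop :=
  ((ends e).1 ∈ W ∧ (ends e).2 ∉ W) ∨ ((ends e).1 ∉ W ∧ (ends e).2 ∈ W)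

/-- `W` is a spine: all of its boundary edges are bridges (separating nodes). -/
def Spine [Fintype E] [DecidableEq E] (ends : E → V × V) (W : Finset V) : Prop :=
  ∀ e : E, Boundary ends W e → Bridge ends e

/-- The polarization `q` is integral at the subcurve `W`: for every connected
component `C` of `W` and of `Wᶜ`, the number q_C - δ_C/2 is an integer. -/
def IntegralAt [Fintype V] [Fintype E] [DecidableEq V] [DecidableEq E]
    (ends : E → V × V) (q : V → ℚ) (W : Finset V) : Prop :=
  ∀ C : Finset V, (IsCompOf ends C W ∨ IsCompOf ends C Wᶜ) →
    ∃ n : ℤ, (∑ w ∈ C, q w) - (valAB ends C Cᶜ : ℚ) / 2 = (n : ℚ)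

/-- The polarization `q` is general: not integral at any proper subcurve. -/
def GeneralPol [Fintype V] [Fintype E] [DecidableEq V] [DecidableEq E]
    (ends : E → V × V) (q : V → ℚ) : Prop :=
  ∀ W : Finset V, W.Nonempty → W ≠ Finset.univ → ¬ IntegralAt ends q W

/-- The polarization `q` is non-degenerate: not integral at any proper subcurve
which is not a spine. -/
def NonDegPol [Fintype V] [Fintype E] [DecidableEq V] [DecidableEq E]
    (ends : E → V × V) (q : V → ℚ) : Prop :=
  ∀ W : Finset V, W.Nonempty → W ≠ Finset.univ → ¬ Spine ends W →
    ¬ IntegralAt ends q W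

/-- A line bundle of multidegree `d` is `q`-semistable. -/
def SemistableLB [Fintype V] [Fintype E] [DecidableEq V] [DecidableEq E]
    (ends : E → V × V) (q : V → ℚ) (d : V → ℤ) : Prop :=
  ((∑ v, d v : ℤ) : ℚ) = (∑ v, q v) ∧
  ∀ W : Finset V, W ≠ Finset.univ →
    ((∑ w ∈ W, d w : ℤ) : ℚ) ≥ (∑ w ∈ W, q w) - (valAB ends W Wᶜ : ℚ) / 2


section Aux
variable [Fintype V] [Fintype E] [DecidableEq V] [DecidableEq E]

lemma valS_cast (ends : E → V × V) (F : Finset E) (A B : Finset V) :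
    (valS ends F A B : ℤ) = ∑ e ∈ F,
      (if ((ends e).1 ∈ A ∧ (ends e).2 ∈ B) ∨ ((ends e).1 ∈ B ∧ (ends e).2 ∈ A)
        then (1:ℤ) else 0) := by
  rw [valS, Finset.card_filter]
  push_cast
  rfl

lemma lap_eq_sum (ends : E → V × V) (F : Finset E) (t : V → ℤ) (v : V) :
    lapF ends F t v = ∑ e ∈ F,
      ((if (ends e).1 = v ∧ (ends e).2 ≠ v then t (ends e).2 - t v else 0) +
       (if (ends e).2 = v ∧ (ends e).1 ≠ v then t (ends e).1 - t v else 0)) := by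
  rw [lapF]
  simp only [valS_cast, Finset.mul_sum]
  rw [Finset.sum_comm, ← Finset.sum_add_distrib]
  apply Finset.sum_congr rfl
  intro x hx
  simp only [Finset.mem_singleton, Finset.mem_compl]
  by_cases ha : (ends x).1 = v <;> by_cases hb : (ends x).2 = v <;>
    simp [ha, hb] <;> ring

lemma sum_gco (ends : E → V × V) (t : V → ℤ) (W : Finset V) (x : E) :
    ∑ v ∈ W, ((if (ends x).1 = v ∧ (ends x).2 ≠ v then t (ends x).2 - t v else 0) +
       (if (ends x).2 = v ∧ (ends x).1 ≠ v then t (ends x).1 - t v else 0))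
    = (if (ends x).1 ∈ W ∧ (ends x).2 ∉ W then t (ends x).2 - t (ends x).1 else 0) +
      (if (ends x).2 ∈ W ∧ (ends x).1 ∉ W then t (ends x).1 - t (ends x).2 else 0) := by
  rw [Finset.sum_add_distrib]
  have hA : ∑ v ∈ W, (if (ends x).1 = v ∧ (ends x).2 ≠ v then t (ends x).2 - t v else 0)
      = if (ends x).1 ∈ W ∧ (ends x).2 ≠ (ends x).1 then t (ends x).2 - t (ends x).1 else 0 := by
    rw [Finset.sum_congr rfl (g := fun v => if (ends x).1 = v then
        (if (ends x).2 ≠ v then t (ends x).2 - t v else 0) else 0) (fun v hv => by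
      by_cases h : (ends x).1 = v <;> simp [h])]
    rw [Finset.sum_ite_eq]
    by_cases h1 : (ends x).1 ∈ W <;> by_cases h2 : (ends x).2 = (ends x).1 <;> simp [h1, h2]
  have hB : ∑ v ∈ W, (if (ends x).2 = v ∧ (ends x).1 ≠ v then t (ends x).1 - t v else 0)
      = if (ends x).2 ∈ W ∧ (ends x).1 ≠ (ends x).2 then t (ends x).1 - t (ends x).2 else 0 := by
    rw [Finset.sum_congr rfl (g := fun v => if (ends x).2 = v then
        (if (ends x).1 ≠ v then t (ends x).1 - t v else 0) else 0) (fun v hv => by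
      by_cases h : (ends x).2 = v <;> simp [h])]
    rw [Finset.sum_ite_eq]
    by_cases h1 : (ends x).2 ∈ W <;> by_cases h2 : (ends x).1 = (ends x).2 <;> simp [h1, h2]
  rw [hA, hB]
  rcases eq_or_ne (ends x).1 (ends x).2 with h3 | h3
  · rw [h3]; simp
  · have h3' : (ends x).2 ≠ (ends x).1 := Ne.symm h3
    by_cases h1 : (ends x).1 ∈ W <;> by_cases h2 : (ends x).2 ∈ W <;>
      simp [h1, h2, h3, h3'] <;> omega

lemma sum_lap_le (ends : E → V × V) (F : Finset E) (t : V → ℤ) (W : Finset V)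
    (hmax : ∀ v ∈ W, ∀ w, w ∉ W → t w < t v) :
    ∑ v ∈ W, lapF ends F t v ≤ -(valS ends F W Wᶜ : ℤ) := by
  simp only [lap_eq_sum]
  rw [Finset.sum_comm]
  rw [valS_cast, ← Finset.sum_neg_distrib]
  apply Finset.sum_le_sum
  intro x hx
  rw [sum_gco]
  simp only [Finset.mem_compl]
  by_cases h1 : (ends x).1 ∈ W <;> by_cases h2 : (ends x).2 ∈ W <;> simp [h1, h2]
  · have := hmax _ h1 _ h2; omega
  · have := hmax _ h2 _ h1; omega

lemma lap_const (ends : E → V × V) (F : Finset E) (t : V → ℤ)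
    (hc : ∀ u v : V, t u = t v) (v : V) : lapF ends F t v = 0 := by
  rw [lap_eq_sum]
  apply Finset.sum_eq_zero
  intro x hx
  rw [hc (ends x).2 v, hc (ends x).1 v]
  simp

lemma card_split (ends : E → V × V) (W : Finset V) (S : Finset E) :
    S.card = insideE ends W S + insideE ends Wᶜ S + valS ends S W Wᶜ := by
  unfold insideE valS
  rw [Finset.card_filter, Finset.card_filter, Finset.card_filter,
    ← Finset.sum_add_distrib, ← Finset.sum_add_distrib, Finset.card_eq_sum_ones]
  apply Finset.sum_congr rfl
  intro x hx
  by_cases h1 : (ends x).1 ∈ W <;> by_cases h2 : (ends x).2 ∈ W <;> simp [h1, h2]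

lemma valAB_split (ends : E → V × V) (W : Finset V) (S : Finset E) :
    valAB ends W Wᶜ = valS ends S W Wᶜ + valS ends (Finset.univ \ S) W Wᶜ := by
  unfold valAB valS
  rw [← Finset.card_union_of_disjoint
    (Finset.disjoint_filter_filter Finset.disjoint_sdiff),
    ← Finset.filter_union, Finset.union_sdiff_of_subset (Finset.subset_univ S)]

lemma valS_comm (ends : E → V × V) (F : Finset E) (A B : Finset V) :
    valS ends F A B = valS ends F B A := by
  unfold valS
  congr 1
  apply Finset.filter_congr
  intro x hx
  tauto

end Aux

/-- two distinct v₀-quasistable 0-cochains are never equivalent modulo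
the image of the Laplacian of Γ∖S. -/
theorem stmt9 [Fintype V] [Fintype E] [DecidableEq V] [DecidableEq E] (ends : E → V × V) (S : Finset E) (q : V → ℚ) (qz : ℤ)
    (hq : ∑ v, q v = (qz : ℚ)) (v₀ : V)
    (hconn : ConnF ends (Finset.univ \ S)) (d e : V → ℤ)
    (hd : Quasistable ends S q v₀ d) (he : Quasistable ends S q v₀ e)
    (t : V → ℤ) (ht : ∀ v, d v = e v + lapF ends (Finset.univ \ S) t v) :
    d = e := by
  classical
  by_contra hne
  have hV : Nonempty V := by
    by_contra h
    exact hne (funext fun v => absurd ⟨v⟩ h)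
  have hU : (Finset.univ : Finset V).Nonempty := Finset.univ_nonempty_iff.mpr hV
  set F := (Finset.univ \ S : Finset E) with hF
  set M := Finset.univ.sup' hU t with hM
  set W := Finset.univ.filter (fun v => t v = M) with hW
  have hmemW : ∀ v, v ∈ W ↔ t v = M := fun v => by simp [hW]
  have hle : ∀ v, t v ≤ M := fun v => Finset.le_sup' t (Finset.mem_univ v)
  have hWne : W.Nonempty := by
    obtain ⟨b, hb, hbe⟩ := Finset.exists_mem_eq_sup' hU t
    exact ⟨b, (hmemW b).mpr hbe.symm⟩
  have hmax : ∀ v ∈ W, ∀ w, w ∉ W → t w < t v := by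
    intro v hv w hw
    have h1 := (hmemW v).mp hv
    have h2 := hle w
    have h3 : t w ≠ M := fun h => hw ((hmemW w).mpr h)
    omega
  have hWuniv : W ≠ Finset.univ := by
    intro h
    apply hne
    funext v
    have hconst : ∀ u w : V, t u = t w := by
      intro u w
      have hu := (hmemW u).mp (h ▸ Finset.mem_univ u)
      have hw := (hmemW w).mp (h ▸ Finset.mem_univ w)
      omega
    rw [ht v, lap_const ends F t hconst v, add_zero]
  have hWcne : Wᶜ ≠ Finset.univ := by
    intro h
    obtain ⟨w, hw⟩ := hWne
    exact (Finset.mem_compl.mp (h ▸ Finset.mem_univ w)) hw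
  have hsum : ∑ v ∈ W, d v ≤ ∑ v ∈ W, e v - (valS ends F W Wᶜ : ℤ) := by
    have h1 : ∑ v ∈ W, d v = ∑ v ∈ W, e v + ∑ v ∈ W, lapF ends F t v := by
      rw [← Finset.sum_add_distrib]
      exact Finset.sum_congr rfl (fun v _ => ht v)
    have h2 := sum_lap_le ends F t W hmax
    omega
  have hcast : (∑ w ∈ W, (d w : ℚ)) ≤ (∑ w ∈ W, (e w : ℚ)) - (valS ends F W Wᶜ : ℚ) := by
    exact_mod_cast hsum
  have hsplit : (S.card : ℚ) = (insideE ends W S : ℚ) + (insideE ends Wᶜ S : ℚ)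
      + (valS ends S W Wᶜ : ℚ) := by
    exact_mod_cast card_split ends W S
  have hvs : (valAB ends W Wᶜ : ℚ) = (valS ends S W Wᶜ : ℚ) + (valS ends F W Wᶜ : ℚ) := by
    exact_mod_cast valAB_split ends W S
  have hABc : valAB ends Wᶜ Wᶜᶜ = valAB ends W Wᶜ := by
    rw [compl_compl]
    exact valS_comm ends Finset.univ Wᶜ W
  have hq1 : (∑ w ∈ W, q w) + (∑ w ∈ Wᶜ, q w) = ∑ v, q v := Finset.sum_add_sum_compl W q
  have hd1 : (∑ w ∈ W, (d w : ℚ)) + (∑ w ∈ Wᶜ, (d w : ℚ)) = ∑ v, (d v : ℚ) :=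
    Finset.sum_add_sum_compl W _
  have he1 : (∑ w ∈ W, (e w : ℚ)) + (∑ w ∈ Wᶜ, (e w : ℚ)) = ∑ v, (e v : ℚ) :=
    Finset.sum_add_sum_compl W _
  have htotd : (∑ v, (d v : ℚ)) = (∑ v, q v) - S.card := by
    have := hd.1.1; push_cast at this; exact this
  have htote : (∑ v, (e v : ℚ)) = (∑ v, q v) - S.card := by
    have := he.1.1; push_cast at this; exact this
  by_cases hv0 : v₀ ∈ W
  · have hstr := hd.2 W hWuniv hv0
    have hsemi := he.1.2 Wᶜ hWcne
    rw [hABc] at hsemi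
    linarith
  · have hstr := he.2 Wᶜ hWcne (Finset.mem_compl.mpr hv0)
    rw [hABc] at hstr
    have hsemi := hd.1.2 W hWuniv
    linarith
end

section
/- For any finite graph Γ and any subset S ⊆ E(Γ), the complexity of the graph Γ̂_S obtained by subdividing each edge of S once satisfies c(Γ̂_S) = Σ_{S' ⊆ S} c(Γ∖S'), where the sum is over all subsets S' of S and c denotes the number of spanning trees. -/
open Finset

variable {V E : Type}

/-- The graph obtained from Γ by subdividing once each edge belonging to `S`:
its vertices, edges and endpoint map. -/
def subEnds [DecidableEq E] (ends : E → V × V) (S : Finset E) :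
    ({e : E // e ∉ S} ⊕ ({e : E // e ∈ S} × Bool)) →
      (V ⊕ {e : E // e ∈ S}) × (V ⊕ {e : E // e ∈ S})
  | Sum.inl e => (Sum.inl (ends e.1).1, Sum.inl (ends e.1).2)
  | Sum.inr (e, false) => (Sum.inl (ends e.1).1, Sum.inr e)
  | Sum.inr (e, true) => (Sum.inr e, Sum.inl (ends e.1).2)

/-!
In a spanning tree `U` of Γ̂_S every midpoint is reached, so each `e ∈ S` keeps one or both of
its halves in `U`. Let `T` consist of the edges of Γ lying in `U` (for `e ∈ S`: both halves), and
`S'` of the edges of `S` of which only the half at the second endpoint survives. Collapsing each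
midpoint onto the endpoint it stays attached to shows that `T` connects Γ∖S', and
`|U| = |T| + |S|` while Γ̂_S has `|S|` more vertices than Γ, so `T` is a spanning tree of Γ∖S'.
Conversely, `(S', T)` lifts to `U` by adding the half at the second endpoint for `e ∈ S'` and the
half at the first endpoint for `e ∈ S ∖ (S' ∪ T)`. Spanning trees are counted as connected edge
sets of size `|V| - 1`, so only connectivity and edge counts need checking.
-/

section Reachability

variable {V' E' : Type} {ends : E → V × V} {F : Finset E} {u v : V}

theorem Reaches.symm (h : Reaches ends F u v) : Reaches ends F v u :=
  Relation.ReflTransGen.mono (fun _ _ ⟨e, he, hab⟩ => ⟨e, he, hab.symm⟩) _ _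
    (Relation.ReflTransGen.swap _ _ h)

theorem Reaches.of_mem {e : E} (he : e ∈ F) : Reaches ends F (ends e).1 (ends e).2 :=
  .single ⟨e, he, .inl rfl⟩

theorem Reaches.map {ends' : E' → V' × V'} {F' : Finset E'} (f : V → V')
    (hf : ∀ e ∈ F, Reaches ends' F' (f (ends e).1) (f (ends e).2))
    (h : Reaches ends F u v) : Reaches ends' F' (f u) (f v) :=
  Relation.ReflTransGen.lift' f (fun a b ⟨e, he, hab⟩ => by
    rcases hab with hab | hab <;> have hfe := hf e he <;> rw [hab] at hfe
    exacts [hfe, hfe.symm]) u v h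

theorem Reaches.exists_incident (h : Reaches ends F u v) (huv : u ≠ v) :
    ∃ e ∈ F, (ends e).1 = u ∨ (ends e).2 = u := by
  rcases Relation.ReflTransGen.cases_head h with rfl | ⟨w, ⟨e, he, hue⟩, -⟩
  · exact absurd rfl huv
  · exact ⟨e, he, hue.imp (by simp [·]) (by simp [·])⟩

end Reachability

section Subdivision

open Sum

variable [DecidableEq E] {ends : E → V × V} {S S' T : Finset E}

abbrev SubdivEdge (S : Finset E) : Type := {e : E // e ∉ S} ⊕ ({e : E // e ∈ S} × Bool)

theorem subEnds_incident_mid {x : SubdivEdge S} {e : {e : E // e ∈ S}}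
    (h : (subEnds ends S x).1 = inr e ∨ (subEnds ends S x).2 = inr e) :
    x = inr (e, true) ∨ x = inr (e, false) := by
  rcases x with f | ⟨f, _ | _⟩ <;> simp_all [subEnds]

theorem ConnF.half_mem {U : Finset (SubdivEdge S)} (hU : ConnF (subEnds ends S) U)
    (e : {e : E // e ∈ S}) : inr (e, true) ∈ U ∨ inr (e, false) ∈ U := by
  obtain ⟨x, hx, hxe⟩ := (hU (inr e) (inl (ends e).1)).exists_incident inr_ne_inl
  rcases subEnds_incident_mid hxe with rfl | rfl <;> simp [hx]

def deletedEdges (S : Finset E) (U : Finset (SubdivEdge S)) : Finset E :=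
  S.filter fun e => ∃ h : e ∈ S, inr (⟨e, h⟩, true) ∈ U ∧ inr (⟨e, h⟩, false) ∉ U

variable {U : Finset (SubdivEdge S)}

theorem mem_deletedEdges {e : {e : E // e ∈ S}} :
    e.1 ∈ deletedEdges S U ↔ inr (e, true) ∈ U ∧ inr (e, false) ∉ U := by
  simp [deletedEdges, e.2]

theorem deletedEdges_subset : deletedEdges S U ⊆ S := filter_subset _ _

variable [Fintype E]

open Classical in
noncomputable def liftEdges (S S' T : Finset E) : Finset (SubdivEdge S) :=
  univ.filter fun
    | inl e => e.1 ∈ T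
    | inr (e, b) => e.1 ∈ T ∨ (b = true ↔ e.1 ∈ S')

@[simp] theorem mem_liftEdges_inl {e : {e : E // e ∉ S}} :
    inl e ∈ liftEdges S S' T ↔ e.1 ∈ T := by
  simp [liftEdges]

@[simp] theorem mem_liftEdges_inr_true {e : {e : E // e ∈ S}} :
    inr (e, true) ∈ liftEdges S S' T ↔ e.1 ∈ T ∨ e.1 ∈ S' := by
  simp [liftEdges]

@[simp] theorem mem_liftEdges_inr_false {e : {e : E // e ∈ S}} :
    inr (e, false) ∈ liftEdges S S' T ↔ e.1 ∈ T ∨ e.1 ∉ S' := by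
  simp [liftEdges]

def baseEdges (S : Finset E) (U : Finset (SubdivEdge S)) : Finset E :=
  univ.filter fun e => if h : e ∈ S
    then inr (⟨e, h⟩, true) ∈ U ∧ inr (⟨e, h⟩, false) ∈ U
    else inl ⟨e, h⟩ ∈ U

theorem mem_baseEdges_of_mem {e : {e : E // e ∈ S}} :
    e.1 ∈ baseEdges S U ↔ inr (e, true) ∈ U ∧ inr (e, false) ∈ U := by
  simp [baseEdges, e.2]

theorem mem_baseEdges_of_notMem {e : {e : E // e ∉ S}} :
    e.1 ∈ baseEdges S U ↔ inl e ∈ U := by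
  simp [baseEdges, e.2]

theorem disjoint_baseEdges_deletedEdges : Disjoint (baseEdges S U) (deletedEdges S U) := by
  refine disjoint_left.2 fun e hb hd => ?_
  lift e to {e : E // e ∈ S} using deletedEdges_subset hd
  exact (mem_deletedEdges.1 hd).2 (mem_baseEdges_of_mem.1 hb).2

theorem baseEdges_liftEdges (hT : Disjoint T S') : baseEdges S (liftEdges S S' T) = T := by
  ext e
  by_cases he : e ∈ S
  · lift e to {e : E // e ∈ S} using he
    have : e.1 ∈ T → e.1 ∉ S' := fun h => disjoint_left.1 hT h
    simp only [mem_baseEdges_of_mem, mem_liftEdges_inr_true, mem_liftEdges_inr_false]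
    tauto
  · lift e to {e : E // e ∉ S} using he
    simp [mem_baseEdges_of_notMem]

theorem deletedEdges_liftEdges (hS' : S' ⊆ S) (hT : Disjoint T S') :
    deletedEdges S (liftEdges S S' T) = S' := by
  ext e
  by_cases he : e ∈ S
  · lift e to {e : E // e ∈ S} using he
    have : e.1 ∈ T → e.1 ∉ S' := fun h => disjoint_left.1 hT h
    simp only [mem_deletedEdges, mem_liftEdges_inr_true, mem_liftEdges_inr_false]
    tauto
  · exact iff_of_false (fun h => he (deletedEdges_subset h)) (fun h => he (hS' h))

theorem liftEdges_baseEdges_deletedEdges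
    (hU : ∀ e : {e : E // e ∈ S}, inr (e, true) ∈ U ∨ inr (e, false) ∈ U) :
    liftEdges S (deletedEdges S U) (baseEdges S U) = U := by
  ext (e | ⟨e, _ | _⟩)
  · simp [mem_baseEdges_of_notMem]
  all_goals
    have := hU e
    simp only [mem_liftEdges_inr_true, mem_liftEdges_inr_false, mem_baseEdges_of_mem,
      mem_deletedEdges]
    tauto

theorem card_liftEdges (hT : Disjoint T S') : #(liftEdges S S' T) = #T + #S := by
  have halves (e : {e : E // e ∈ S}) :
      ((if e.1 ∈ T ∨ e.1 ∈ S' then 1 else 0) + if e.1 ∈ T ∨ e.1 ∉ S' then 1 else 0) =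
        1 + if e.1 ∈ T then 1 else 0 := by
    have : e.1 ∈ T → e.1 ∉ S' := fun h => disjoint_left.1 hT h
    by_cases hS' : e.1 ∈ S' <;> by_cases hT' : e.1 ∈ T <;> simp_all
  calc #(liftEdges S S' T)
      = ∑ x : SubdivEdge S, if x ∈ liftEdges S S' T then 1 else 0 := by
        rw [← card_filter, filter_mem_eq_inter, univ_inter]
    _ = (∑ e : {e : E // e ∉ S}, if e.1 ∈ T then 1 else 0) +
          ∑ e : {e : E // e ∈ S}, (1 + if e.1 ∈ T then 1 else 0) := by
        simp only [Fintype.sum_sum_type, Fintype.sum_prod_type, Fintype.sum_bool,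
          mem_liftEdges_inl, mem_liftEdges_inr_true, mem_liftEdges_inr_false, halves]
    _ = #T + #S := by
        have hsplit : ((∑ e : {e : E // e ∈ S}, if e.1 ∈ T then 1 else 0) +
            ∑ e : {e : E // e ∉ S}, if e.1 ∈ T then 1 else 0) = #T := by
          convert Fintype.sum_subtype_add_sum_subtype (· ∈ S) fun e => if e ∈ T then 1 else 0
          rw [sum_boole, Nat.cast_id, filter_mem_eq_inter, univ_inter]
        rw [sum_add_distrib, sum_const, card_univ, Fintype.card_coe, smul_eq_mul, mul_one]
        omega

theorem reaches_liftEdges_of_mem {e : E} (he : e ∈ T) :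
    Reaches (subEnds ends S) (liftEdges S S' T) (inl (ends e).1) (inl (ends e).2) := by
  by_cases h : e ∈ S
  · lift e to {e : E // e ∈ S} using h
    exact (Reaches.of_mem (e := inr (e, false)) (by simp [he])).trans
      (Reaches.of_mem (e := inr (e, true)) (by simp [he]))
  · lift e to {e : E // e ∉ S} using h
    exact Reaches.of_mem (e := inl e) (by simp [he])

theorem connF_liftEdges (hT : ConnF ends T) : ConnF (subEnds ends S) (liftEdges S S' T) := by
  have toBase (x : V ⊕ {e : E // e ∈ S}) :
      ∃ v : V, Reaches (subEnds ends S) (liftEdges S S' T) x (inl v) := by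
    rcases x with v | e
    · exact ⟨v, .refl⟩
    by_cases h : e.1 ∈ S'
    · exact ⟨(ends e.1).2, .of_mem (e := inr (e, true)) (by simp [h])⟩
    · exact ⟨(ends e.1).1, (Reaches.of_mem (e := inr (e, false)) (by simp [h])).symm⟩
  intro x y
  obtain ⟨u, hu⟩ := toBase x
  obtain ⟨v, hv⟩ := toBase y
  exact hu.trans (((hT u v).map inl fun e he => reaches_liftEdges_of_mem he).trans hv.symm)

def collapse (ends : E → V × V) (S : Finset E) (U : Finset (SubdivEdge S)) :
    V ⊕ {e : E // e ∈ S} → V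
  | inl v => v
  | inr e => if inr (e, false) ∈ U then (ends e.1).1 else (ends e.1).2

theorem connF_baseEdges (hU : ConnF (subEnds ends S) U) :
    ConnF ends (baseEdges S U) := by
  have hedge : ∀ x ∈ U, Reaches ends (baseEdges S U)
      (collapse ends S U (subEnds ends S x).1) (collapse ends S U (subEnds ends S x).2) := by
    rintro (e | ⟨e, _ | _⟩) hx
    · exact .of_mem (mem_baseEdges_of_notMem.2 hx)
    · simp only [subEnds, collapse, if_pos hx]
      exact .refl
    · by_cases h : inr (e, false) ∈ U
      · simp only [subEnds, collapse, if_pos h]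
        exact .of_mem (mem_baseEdges_of_mem.2 ⟨hx, h⟩)
      · simp only [subEnds, collapse, if_neg h]
        exact .refl
  intro u v
  exact (hU (inl u) (inl v)).map (collapse ends S U) hedge

end Subdivision

section SpanningTrees

variable [Fintype V] [Fintype E] (ends : E → V × V)

open Classical in
noncomputable def spanningTrees (F : Finset E) : Finset (Finset E) :=
  univ.filter fun T => T ⊆ F ∧ ConnF ends T ∧ #T = Fintype.card V - 1

variable {ends} in
theorem mem_spanningTrees {F T : Finset E} :
    T ∈ spanningTrees ends F ↔ T ⊆ F ∧ ConnF ends T ∧ #T = Fintype.card V - 1 := by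
  simp [spanningTrees]

theorem complexity_eq_card_spanningTrees (F : Finset E) :
    complexity ends F = #(spanningTrees ends F) := by
  rw [complexity, ← Set.ncard_coe_finset]
  congr 1
  ext T
  simp [mem_spanningTrees]

end SpanningTrees

theorem card_subdivVert_sub_one [Fintype V] (ends : E → V × V) (S : Finset E) :
    Fintype.card (V ⊕ {e : E // e ∈ S}) - 1 = Fintype.card V - 1 + #S := by
  rw [Fintype.card_sum, Fintype.card_coe]
  rcases S.eq_empty_or_nonempty with rfl | ⟨e, -⟩
  · simp
  · have : 0 < Fintype.card V := Fintype.card_pos_iff.2 ⟨(ends e).1⟩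
    omega

section SubdivisionTrees

open Sum

variable [Fintype V] [Fintype E] [DecidableEq E] {ends : E → V × V} {S S' T : Finset E}

theorem liftEdges_mem_spanningTrees (hT : T ∈ spanningTrees ends (univ \ S')) :
    liftEdges S S' T ∈ spanningTrees (subEnds ends S) univ := by
  obtain ⟨hTS', hconn, hcard⟩ := mem_spanningTrees.1 hT
  have hdisj : Disjoint T S' := (subset_sdiff.1 hTS').2
  refine mem_spanningTrees.2 ⟨subset_univ _, connF_liftEdges hconn, ?_⟩
  rw [card_liftEdges hdisj, card_subdivVert_sub_one ends S, hcard]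

theorem baseEdges_mem_spanningTrees {U : Finset (SubdivEdge S)}
    (hU : U ∈ spanningTrees (subEnds ends S) univ) :
    baseEdges S U ∈ spanningTrees ends (univ \ deletedEdges S U) := by
  obtain ⟨-, hconn, hcard⟩ := mem_spanningTrees.1 hU
  refine mem_spanningTrees.2 ⟨subset_sdiff.2 ⟨subset_univ _, disjoint_baseEdges_deletedEdges⟩,
    connF_baseEdges hconn, ?_⟩
  have hsplit := card_liftEdges (S := S) (disjoint_baseEdges_deletedEdges (U := U))
  rw [liftEdges_baseEdges_deletedEdges hconn.half_mem, hcard,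
    card_subdivVert_sub_one ends S] at hsplit
  omega

end SubdivisionTrees

theorem stmt13_general [Fintype V] [Fintype E] [DecidableEq E] (ends : E → V × V) (S : Finset E) :
    complexity (subEnds ends S) (Finset.univ :
        Finset ({e : E // e ∉ S} ⊕ ({e : E // e ∈ S} × Bool))) =
      ∑ S' ∈ S.powerset, complexity ends (Finset.univ \ S') := by
  simp only [complexity_eq_card_spanningTrees, ← card_sigma]
  refine card_bij' (fun U _ => ⟨deletedEdges S U, baseEdges S U⟩)
    (fun p _ => liftEdges S p.1 p.2) (fun U hU => ?_) (fun p hp => ?_) (fun U hU => ?_)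
    (fun p hp => ?_)
  · exact mem_sigma.2 ⟨mem_powerset.2 deletedEdges_subset, baseEdges_mem_spanningTrees hU⟩
  · exact liftEdges_mem_spanningTrees (mem_sigma.1 hp).2
  · exact liftEdges_baseEdges_deletedEdges (mem_spanningTrees.1 hU).2.1.half_mem
  · obtain ⟨hS', hT⟩ := mem_sigma.1 hp
    have hdisj := (subset_sdiff.1 (mem_spanningTrees.1 hT).1).2
    rw [deletedEdges_liftEdges (mem_powerset.1 hS') hdisj, baseEdges_liftEdges hdisj]

/-- c(Γ̂_S) = Σ_{S' ⊆ S} c(Γ∖S'). -/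
theorem stmt13 [Fintype V] [Fintype E] [DecidableEq V] [DecidableEq E] (ends : E → V × V) (S : Finset E) :
    complexity (subEnds ends S) (Finset.univ :
        Finset ({e : E // e ∉ S} ⊕ ({e : E // e ∈ S} × Bool))) =
      ∑ S' ∈ S.powerset, complexity ends (Finset.univ \ S') :=
  stmt13_general ends S
end
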